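/- arXiv:1706.01508 — 2 statements merged into one kernel-verified Lean document; each statement's English description precedes it below -/
import Mathlib

section
/- In a time-dependent network on a finite vertex set, for all vertices s and d and every time t, the end-to-end arrival function value A_{(s,d)}(t) equals the minimum of A_P(t) over the finitely many walks P from s to d with no repeated vertices; in particular, the infimum defining A_{(s,d)}(t) is attained by such a walk. -/
open scoped ENNReal

/-- Arrival function of a walk: starting at `u` and then visiting the vertices of `l` in
order, departing at time `t`. -/
def walkArr {V : Type*} (A : V → V → ℝ≥0∞ → ℝ≥0∞) : V → List V → ℝ≥0∞ → ℝ≥0∞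
  | _, [], t => t
  | u, v :: l, t => walkArr A v l (A u v t)

/-- `l` (together with start vertex `s`) encodes a walk from `s` to `d`: the walk is the
nonempty vertex sequence `s :: l`, whose last vertex must be `d`. -/
def IsWalkTo {V : Type*} (s d : V) (l : List V) : Prop :=
  (s :: l).getLast (List.cons_ne_nil _ _) = d

/-- The end-to-end arrival function: infimum over all walks from `s` to `d`. -/
noncomputable def endToEnd {V : Type*} (A : V → V → ℝ≥0∞ → ℝ≥0∞) (s d : V) (t : ℝ≥0∞) :
    ℝ≥0∞ :=
  ⨅ l : {l : List V // IsWalkTo s d l}, walkArr A s l.1 t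

/-- The FIFO conditions on a time-dependent network: each edge arrival function is
monotone and arrival is not before departure. -/
def FIFO {V : Type*} (A : V → V → ℝ≥0∞ → ℝ≥0∞) : Prop :=
  ∀ u v : V, Monotone (A u v) ∧ ∀ t, t ≤ A u v t

/-!
A walk that revisits its start vertex `u` can be cut to the part after its last visit of `u`.
The cut-off closed walk from `u` to `u` arrives no earlier than it departs, so by monotonicity
the remaining walk, departing earlier, arrives no later. Removing cycles this way leaves a walk
without repeated vertices, and there are only finitely many of those.
-/

section Walks

variable {V : Type*} {s u v d : V} {q l r : List V}

theorem isWalkTo_cons_iff : IsWalkTo u d (v :: l) ↔ IsWalkTo v d l := by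
  simp only [IsWalkTo, List.getLast_cons (List.cons_ne_nil _ _)]

theorem isWalkTo_append_cons_iff : IsWalkTo s d (q ++ u :: r) ↔ IsWalkTo u d r := by
  induction q generalizing s with
  | nil => exact isWalkTo_cons_iff
  | cons v q ih => exact isWalkTo_cons_iff.trans ih

theorem isWalkTo_singleton (s d : V) : IsWalkTo s d [d] := rfl

theorem walkArr_append_cons (A : V → V → ℝ≥0∞ → ℝ≥0∞) (t : ℝ≥0∞) :
    walkArr A s (q ++ u :: r) t = walkArr A u r (walkArr A s (q ++ [u]) t) := by
  induction q generalizing s t with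
  | nil => rfl
  | cons v q ih => exact ih _

end Walks

namespace FIFO

variable {V : Type*} {A : V → V → ℝ≥0∞ → ℝ≥0∞}

theorem monotone_walkArr (hA : FIFO A) (u : V) (l : List V) : Monotone (walkArr A u l) := by
  induction l generalizing u with
  | nil => exact monotone_id
  | cons v l ih => exact (ih v).comp (hA u v).1

theorem le_walkArr (hA : FIFO A) (u : V) (l : List V) (t : ℝ≥0∞) : t ≤ walkArr A u l t := by
  induction l generalizing u t with
  | nil => exact le_rfl
  | cons v l ih => exact ((hA u v).2 t).trans (ih v _)

theorem walkArr_le_append_cons (hA : FIFO A) (s : V) (q r : List V) (t : ℝ≥0∞) :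
    walkArr A s r t ≤ walkArr A s (q ++ s :: r) t := by
  rw [walkArr_append_cons]
  exact hA.monotone_walkArr s r (hA.le_walkArr s _ t)

theorem exists_nodup_walkArr_le (hA : FIFO A) {u d : V} {l : List V} (hl : IsWalkTo u d l)
    (t : ℝ≥0∞) :
    ∃ l', IsWalkTo u d l' ∧ (u :: l').Nodup ∧ walkArr A u l' t ≤ walkArr A u l t := by
  induction l generalizing u t with
  | nil => exact ⟨[], hl, List.nodup_singleton u, le_rfl⟩
  | cons v m ih =>
    obtain ⟨m', hm', hnodup, hle⟩ := ih (isWalkTo_cons_iff.mp hl) (A u v t)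
    have hwalk : IsWalkTo u d (v :: m') := isWalkTo_cons_iff.mpr hm'
    by_cases hu : u ∈ v :: m'
    · obtain ⟨q, r, hsplit⟩ := List.append_of_mem hu
      rw [hsplit] at hwalk hnodup
      refine ⟨r, isWalkTo_append_cons_iff.mp hwalk,
        hnodup.sublist (List.sublist_append_right q _), ?_⟩
      calc walkArr A u r t ≤ walkArr A u (q ++ u :: r) t := hA.walkArr_le_append_cons u q r t
        _ = walkArr A u (v :: m') t := by rw [hsplit]
        _ ≤ walkArr A u (v :: m) t := hle
    · exact ⟨v :: m', hwalk, List.nodup_cons.mpr ⟨hu, hnodup⟩, hle⟩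

end FIFO

instance finite_nodup_walks {V : Type*} [Finite V] (s d : V) :
    Finite {l : List V // IsWalkTo s d l ∧ (s :: l).Nodup} :=
  have := Fintype.ofFinite V
  Finite.of_injective (fun l => (⟨l.1, (List.nodup_cons.mp l.2.2).2⟩ : {l : List V // l.Nodup}))
    fun _ _ h => Subtype.ext (Subtype.mk.inj h)

/-- The end-to-end arrival function value equals the infimum (in fact, the attained
minimum) of the arrival functions of the finitely many walks with no repeated
vertices. -/
theorem endToEnd_eq_min_over_nodup_walks {V : Type*} [Fintype V]
    (A : V → V → ℝ≥0∞ → ℝ≥0∞) (hA : FIFO A) (s d : V) (t : ℝ≥0∞) :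
    (endToEnd A s d t =
      ⨅ l : {l : List V // IsWalkTo s d l ∧ (s :: l).Nodup}, walkArr A s l.1 t) ∧
    ∃ l : List V, IsWalkTo s d l ∧ (s :: l).Nodup ∧
      walkArr A s l t = endToEnd A s d t := by
  have heq : endToEnd A s d t =
      ⨅ l : {l : List V // IsWalkTo s d l ∧ (s :: l).Nodup}, walkArr A s l.1 t := by
    refine le_antisymm (iInf_mono' fun l => ⟨⟨l.1, l.2.1⟩, le_rfl⟩) (iInf_mono' fun l => ?_)
    obtain ⟨l', hl', hnodup, hle⟩ := hA.exists_nodup_walkArr_le l.2 t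
    exact ⟨⟨l', hl', hnodup⟩, hle⟩
  have : Nonempty {l : List V // IsWalkTo s d l ∧ (s :: l).Nodup} :=
    let ⟨l, hl, hnodup, _⟩ := hA.exists_nodup_walkArr_le (isWalkTo_singleton s d) t
    ⟨⟨l, hl, hnodup⟩⟩
  obtain ⟨⟨l, hl, hnodup⟩, hmin⟩ := exists_eq_ciInf_of_finite
    (f := fun l : {l : List V // IsWalkTo s d l ∧ (s :: l).Nodup} => walkArr A s l.1 t)
  exact ⟨heq, l, hl, hnodup, hmin.trans heq.symm⟩
end

section
/- In a time-dependent network on a finite vertex set, for all vertices s, u, d and every time t, A_{(s,d)}(t) ≤ A_{(u,d)}(A_{(s,u)}(t)). Moreover, for every t there exists a walk P from s to d with no repeated vertices such that A_P(t) = A_{(s,d)}(t) and, for every vertex u occurring on P, A_{(s,d)}(t) = A_{(u,d)}(A_{(s,u)}(t)). -/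
/-!
Cutting a cycle out of a walk can only make it arrive earlier: by FIFO the cycle merely delays
the departure from its base vertex. Hence the infimum defining `endToEnd` may be taken over the
finitely many walks without repeated vertices, and so it is attained. Concatenating an optimal
walk from `s` to `u` with an arbitrary walk from `u` to `d` gives the triangle inequality, and
splitting an optimal walk from `s` to `d` at one of its vertices gives the reverse inequality.
-/

open scoped ENNReal

section Walks

variable {V : Type*} {s u d v : V} {l l₁ l₂ : List V}

@[simp]
theorem isWalkTo_nil : IsWalkTo s d [] ↔ s = d := Iff.rfl

@[simp]
theorem isWalkTo_cons : IsWalkTo s d (v :: l) ↔ IsWalkTo v d l := Iff.rfl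

theorem isWalkTo_append (h₁ : IsWalkTo s u l₁) : IsWalkTo s d (l₁ ++ l₂) ↔ IsWalkTo u d l₂ := by
  induction l₁ generalizing s with
  | nil => rw [isWalkTo_nil.1 h₁]; rfl
  | cons v l₁ ih => exact ih h₁

theorem isWalkTo_append_singleton : IsWalkTo s u (l ++ [u]) :=
  (isWalkTo_append (rfl : IsWalkTo s _ l)).2 rfl

theorem exists_eq_append_isWalkTo_of_mem (hu : u ∈ s :: l) :
    ∃ l₁ l₂, l = l₁ ++ l₂ ∧ IsWalkTo s u l₁ := by
  rcases List.mem_cons.1 hu with rfl | hu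
  · exact ⟨[], l, rfl, rfl⟩
  · obtain ⟨a, b, rfl⟩ := List.append_of_mem hu
    exact ⟨a ++ [u], b, List.append_cons a u b, isWalkTo_append_singleton⟩

variable {A : V → V → ℝ≥0∞ → ℝ≥0∞}

theorem walkArr_append (h₁ : IsWalkTo s u l₁) (t : ℝ≥0∞) :
    walkArr A s (l₁ ++ l₂) t = walkArr A u l₂ (walkArr A s l₁ t) := by
  induction l₁ generalizing s t with
  | nil => rw [isWalkTo_nil.1 h₁]; rfl
  | cons v l₁ ih => exact ih h₁ (A s v t)

theorem walkArr_mono (hA : ∀ u v, Monotone (A u v)) (s : V) (l : List V) :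
    Monotone (walkArr A s l) := by
  induction l generalizing s with
  | nil => exact monotone_id
  | cons v l ih => exact (ih v).comp (hA s v)

theorem le_walkArr (hA : ∀ u v t, t ≤ A u v t) (s : V) (l : List V) (t : ℝ≥0∞) :
    t ≤ walkArr A s l t := by
  induction l generalizing s t with
  | nil => exact le_rfl
  | cons v l ih => exact (hA s v t).trans (ih v _)

theorem exists_nodup_walkArr_le_of_isWalkTo (hA : FIFO A) {s d : V} {l : List V}
    (h : IsWalkTo s d l) :
    ∃ l' ⊆ l, IsWalkTo s d l' ∧ (s :: l').Nodup ∧ ∀ t, walkArr A s l' t ≤ walkArr A s l t := by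
  by_cases hs : s ∈ l
  · obtain ⟨a, b, rfl⟩ := List.append_of_mem hs
    have hcycle : IsWalkTo s s (a ++ [s]) := isWalkTo_append_singleton
    rw [List.append_cons] at h ⊢
    obtain ⟨l', hsub, hl', hnd, hle⟩ :=
      exists_nodup_walkArr_le_of_isWalkTo hA ((isWalkTo_append hcycle).1 h)
    refine ⟨l', List.Subset.trans hsub (List.subset_append_right _ _), hl', hnd, fun t => ?_⟩
    calc walkArr A s l' t ≤ walkArr A s b t := hle t
      _ ≤ walkArr A s b (walkArr A s (a ++ [s]) t) :=
        walkArr_mono (fun u v => (hA u v).1) s b (le_walkArr (fun u v => (hA u v).2) s _ t)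
      _ = walkArr A s (a ++ [s] ++ b) t := (walkArr_append hcycle t).symm
  · cases l with
    | nil => exact ⟨[], List.Subset.refl _, h, List.nodup_singleton s, fun _ => le_rfl⟩
    | cons v l =>
      obtain ⟨l', hsub, hl', hnd, hle⟩ :=
        exists_nodup_walkArr_le_of_isWalkTo hA (isWalkTo_cons.1 h)
      have hsub' : v :: l' ⊆ v :: l := List.cons_subset_cons v hsub
      exact ⟨v :: l', hsub', hl', List.nodup_cons.2 ⟨fun hm => hs (hsub' hm), hnd⟩,
        fun t => hle (A s v t)⟩
termination_by l.length
decreasing_by all_goals subst_vars; simp only [List.length_append, List.length_cons]; omega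

end Walks

section EndToEnd

variable {V : Type*} {A : V → V → ℝ≥0∞ → ℝ≥0∞} {s u d : V} {l : List V}

theorem endToEnd_le_walkArr (h : IsWalkTo s d l) (t : ℝ≥0∞) :
    endToEnd A s d t ≤ walkArr A s l t :=
  iInf_le (fun l : {l : List V // IsWalkTo s d l} => walkArr A s l.1 t) ⟨l, h⟩

theorem endToEnd_mono (hA : ∀ u v, Monotone (A u v)) (s d : V) : Monotone (endToEnd A s d) :=
  fun _ _ h => le_iInf fun l => (iInf_le _ l).trans (walkArr_mono hA s l.1 h)

theorem exists_nodup_walkArr_eq_endToEnd [Finite V] (hA : FIFO A) (s d : V) (t : ℝ≥0∞) :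
    ∃ l, IsWalkTo s d l ∧ (s :: l).Nodup ∧ walkArr A s l t = endToEnd A s d t := by
  have : Fintype V := Fintype.ofFinite V
  let S : Set (List V) := {l | IsWalkTo s d l ∧ (s :: l).Nodup}
  have hS : S.Finite := (List.finite_length_le V (Fintype.card V)).subset fun l hl => by
    have := hl.2.length_le_card
    simp only [List.length_cons] at this
    exact Nat.le_of_succ_le this
  obtain ⟨l₀, -, hl₀, hnd₀, -⟩ := 
    exists_nodup_walkArr_le_of_isWalkTo hA (rfl : IsWalkTo s d [d])
  obtain ⟨l, ⟨hl, hnd⟩, hmin⟩ := S.exists_min_image (walkArr A s · t) hS ⟨l₀, hl₀, hnd₀⟩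
  refine ⟨l, hl, hnd, le_antisymm (le_iInf fun ⟨l', hl'⟩ => ?_) (endToEnd_le_walkArr hl t)⟩
  obtain ⟨l'', -, hl'', hnd'', hle⟩ := exists_nodup_walkArr_le_of_isWalkTo hA hl'
  exact (hmin l'' ⟨hl'', hnd''⟩).trans (hle t)

theorem endToEnd_le_endToEnd_endToEnd [Finite V] (hA : FIFO A) (s u d : V) (t : ℝ≥0∞) :
    endToEnd A s d t ≤ endToEnd A u d (endToEnd A s u t) := by
  obtain ⟨l₁, hl₁, -, heq⟩ := exists_nodup_walkArr_eq_endToEnd hA s u t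
  rw [← heq]
  refine le_iInf fun ⟨l₂, hl₂⟩ => ?_
  rw [← walkArr_append hl₁]
  exact endToEnd_le_walkArr ((isWalkTo_append hl₁).2 hl₂) t

theorem endToEnd_endToEnd_le_walkArr_of_mem (hA : ∀ u v, Monotone (A u v))
    (hl : IsWalkTo s d l) (hu : u ∈ s :: l) (t : ℝ≥0∞) :
    endToEnd A u d (endToEnd A s u t) ≤ walkArr A s l t := by
  obtain ⟨l₁, l₂, rfl, hl₁⟩ := exists_eq_append_isWalkTo_of_mem hu
  calc endToEnd A u d (endToEnd A s u t)
      ≤ endToEnd A u d (walkArr A s l₁ t) := endToEnd_mono hA u d (endToEnd_le_walkArr hl₁ t)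
    _ ≤ walkArr A u l₂ (walkArr A s l₁ t) := endToEnd_le_walkArr ((isWalkTo_append hl₁).1 hl) _
    _ = walkArr A s (l₁ ++ l₂) t := (walkArr_append hl₁ t).symm

end EndToEnd

/-- The end-to-end arrival function satisfies the triangle inequality
`A_{(s,d)}(t) ≤ A_{(u,d)}(A_{(s,u)}(t))`; moreover for each departure time `t` there is a
walk `P` from `s` to `d` with no repeated vertices attaining `A_{(s,d)}(t)` such that
equality holds at every vertex `u` of `P`. -/
theorem endToEnd_triangle_and_attained {V : Type*} [Fintype V]
    (A : V → V → ℝ≥0∞ → ℝ≥0∞) (hA : FIFO A) (s d : V) (t : ℝ≥0∞) :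
    (∀ u : V, endToEnd A s d t ≤ endToEnd A u d (endToEnd A s u t)) ∧
    ∃ l : List V, IsWalkTo s d l ∧ (s :: l).Nodup ∧
      walkArr A s l t = endToEnd A s d t ∧
      ∀ u ∈ s :: l, endToEnd A s d t = endToEnd A u d (endToEnd A s u t) := by
  refine ⟨fun u => endToEnd_le_endToEnd_endToEnd hA s u d t, ?_⟩
  obtain ⟨l, hl, hnd, heq⟩ := exists_nodup_walkArr_eq_endToEnd hA s d t
  refine ⟨l, hl, hnd, heq, fun u hu => (endToEnd_le_endToEnd_endToEnd hA s u d t).antisymm ?_⟩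
  exact heq ▸ endToEnd_endToEnd_le_walkArr_of_mem (fun u v => (hA u v).1) hl hu t
end
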